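/- arXiv:1211.5711 — 2 statements merged into one kernel-verified Lean document; each statement's English description precedes it below -/
import Mathlib

section
/- Let w be a nonzero real number. Then for all positive reals x, y, G_{2w,0}(G_{3w,w}(x,y), √(xy)) = G_{2w,0}(x,y), i.e., the power mean of exponent 2w is invariant with respect to the pair (G_{3w,w}, geometric mean). -/
/-! Put `u = x ^ w` and `v = y ^ w`. Raising the two arguments on the left to the power `2 w` gives
`(u³ + v³) / (u + v) = u² - u v + v²` and `u v`, whose sum is `u² + v² = x ^ (2 w) + y ^ (2 w)`.
Since `G_{p,0}(a, b) = ((a ^ p + b ^ p) / 2) ^ (1 / p)` depends only on the power sum `a ^ p + b ^ p`,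
both sides agree. -/

noncomputable def gini (p q x y : ℝ) : ℝ := ((x ^ p + y ^ p) / (x ^ q + y ^ q)) ^ (1 / (p - q))

open Real

lemma gini_rpow_sub {p q x y : ℝ} (hpq : p ≠ q) (hx : 0 ≤ x) (hy : 0 ≤ y) :
    gini p q x y ^ (p - q) = (x ^ p + y ^ p) / (x ^ q + y ^ q) := by
  rw [gini, one_div]
  exact rpow_inv_rpow (by positivity) (sub_ne_zero.2 hpq)

lemma gini_zero_right_congr {p a b x y : ℝ} (h : a ^ p + b ^ p = x ^ p + y ^ p) :
    gini p 0 a b = gini p 0 x y := by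
  simp only [gini, h, rpow_zero]

lemma sqrt_mul_rpow_two_mul {x y : ℝ} (hx : 0 ≤ x) (hy : 0 ≤ y) (w : ℝ) :
    √(x * y) ^ (2 * w) = x ^ w * y ^ w := by
  rw [sqrt_eq_rpow, ← rpow_mul (mul_nonneg hx hy), one_div, inv_mul_cancel_left₀ two_ne_zero,
    mul_rpow hx hy]

lemma pow_three_add_pow_three_div_add_mul {u v : ℝ} (h : u + v ≠ 0) :
    (u ^ 3 + v ^ 3) / (u + v) + u * v = u ^ 2 + v ^ 2 := by
  field_simp
  ring

theorem power_mean_invariant_gini_geom (w : ℝ) (hw : w ≠ 0) (x y : ℝ)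
    (hx : 0 < x) (hy : 0 < y) :
    gini (2 * w) 0 (gini (3 * w) w x y) (Real.sqrt (x * y)) = gini (2 * w) 0 x y := by
  apply gini_zero_right_congr
  have h3w : 3 * w - w = 2 * w := by ring
  have hgini : gini (3 * w) w x y ^ (2 * w) = (x ^ (3 * w) + y ^ (3 * w)) / (x ^ w + y ^ w) := by
    rw [← h3w, gini_rpow_sub (fun h => hw (by linarith)) hx.le hy.le]
  have hpow : ∀ t : ℝ, 0 < t → ∀ n : ℕ, t ^ ((n : ℝ) * w) = (t ^ w) ^ n :=
    fun t ht n => by rw [mul_comm, rpow_mul_natCast ht.le]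
  rw [hgini, sqrt_mul_rpow_two_mul hx.le hy.le, show (3 : ℝ) = (3 : ℕ) by norm_num, show (2 : ℝ) = (2 : ℕ) by norm_num,
    hpow x hx, hpow x hx, hpow y hy, hpow y hy]
  exact pow_three_add_pow_three_div_add_mul (by positivity)
end

section
/- Let a ≠ b, c ≠ d, p ≠ q be real parameters satisfying the invariance equation G_{p,q}(G_{a,b}(x,y), G_{c,d}(x,y)) = G_{p,q}(x,y) for all positive reals x, y. Then a + b + c + d = 2(p + q). -/
/-!
Writing `x = e^(m+δ)`, `y = e^(m-δ)`, the identity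
`e^(r(m+δ)) + e^(r(m-δ)) = 2 e^(rm) cosh(rδ)` gives `log G_{p,q}(x, y) = m + φ_{p,q}(δ)` with
`φ_{p,q}(δ) = (log cosh(pδ) - log cosh(qδ)) / (p - q)`, and `φ_{p,q}(δ) = (p + q)/2 · δ² + o(δ²)`.
Taking logarithms in the invariance equation at `(e^t, e^(-t))` gives
`φ_{p,q}(t) = (φ_{a,b}(t) + φ_{c,d}(t))/2 + φ_{p,q}((φ_{a,b}(t) - φ_{c,d}(t))/2)`.
The last term is `o(t²)` since its argument is `O(t²)` and `φ_{p,q}'(0) = 0`, so comparing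
coefficients of `t²` gives `(p + q)/2 = ((a + b)/2 + (c + d)/2)/2`.
-/

open Real Filter Topology

theorem HasDerivAt.tendsto_comp_div {ι : Type*} {l : Filter ι} {f : ℝ → ℝ} {f' β : ℝ}
    (hf : HasDerivAt f f' 0) (hf0 : f 0 = 0) {w g : ι → ℝ} (hg : Tendsto g l (𝓝 0))
    (hg0 : ∀ᶠ i in l, g i ≠ 0) (hw : Tendsto (fun i => w i / g i) l (𝓝 β)) :
    Tendsto (fun i => f (w i) / g i) l (𝓝 (f' * β)) := by
  classical
  set S := Function.update (slope f 0) 0 f'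
  have hS : Tendsto S (𝓝 0) (𝓝 f') := by
    simpa [S] using (continuousAt_update_same.2 (hasDerivAt_iff_tendsto_slope.1 hf)).tendsto
  have hw0 : Tendsto w l (𝓝 0) := by
    simpa using (hw.mul hg).congr' (hg0.mono fun i hi => div_mul_cancel₀ (w i) hi)
  have hfS : ∀ y, f y = S y * y := fun y => by
    rcases eq_or_ne y 0 with rfl | hy
    · simp [hf0]
    · simp [S, hy, slope_def_field, hf0]
  refine ((hS.comp hw0).mul hw).congr fun i => ?_
  rw [Function.comp_apply, hfS, mul_div_assoc]

theorem HasDerivAt.tendsto_comp_div_sq {f : ℝ → ℝ} {f' β : ℝ} (hf : HasDerivAt f f' 0)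
    (hf0 : f 0 = 0) {w : ℝ → ℝ} (hw : Tendsto (fun x => w x / x ^ 2) (𝓝[≠] 0) (𝓝 β)) :
    Tendsto (fun x => f (w x) / x ^ 2) (𝓝[≠] 0) (𝓝 (f' * β)) := by
  refine hf.tendsto_comp_div hf0 ?_
    (eventually_nhdsWithin_of_forall fun x hx => pow_ne_zero 2 hx) hw
  simpa using (tendsto_id.pow 2).mono_left (nhdsWithin_le_nhds (a := (0 : ℝ)))

theorem hasDerivAt_log_one_add_zero : HasDerivAt (fun x => log (1 + x)) 1 0 := by
  simpa using ((hasDerivAt_id (0 : ℝ)).const_add 1).log (by norm_num)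

theorem cosh_sub_one_eq (x : ℝ) : cosh x - 1 = 2 * sinh (x / 2) ^ 2 := by
  have := cosh_two_mul (x / 2)
  rw [mul_div_cancel₀ x two_ne_zero, cosh_sq] at this
  linarith

theorem tendsto_log_cosh_mul_div_sq (r : ℝ) :
    Tendsto (fun x => log (cosh (r * x)) / x ^ 2) (𝓝[≠] 0) (𝓝 (r ^ 2 / 2)) := by
  have hsinh : Tendsto (fun x => sinh (r * x / 2) / x) (𝓝[≠] 0) (𝓝 (r / 2)) := by
    have hw : Tendsto (fun x : ℝ => r * x / 2 / x) (𝓝[≠] 0) (𝓝 (r / 2)) :=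
      tendsto_const_nhds.congr' <| eventually_nhdsWithin_of_forall fun x hx => by
        field_simp [show x ≠ 0 from hx]
    simpa using (hasDerivAt_sinh 0).tendsto_comp_div (l := 𝓝[≠] 0) sinh_zero
      (tendsto_id.mono_left nhdsWithin_le_nhds) self_mem_nhdsWithin hw
  have hcosh : Tendsto (fun x => (cosh (r * x) - 1) / x ^ 2) (𝓝[≠] 0) (𝓝 (r ^ 2 / 2)) := by
    convert (hsinh.pow 2).const_mul 2 using 2 with x
    · rw [cosh_sub_one_eq, div_pow]; ring
    · ring
  simpa using hasDerivAt_log_one_add_zero.tendsto_comp_div_sq (by simp) hcosh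

noncomputable def logGiniSymm (p q z : ℝ) : ℝ := (log (cosh (p * z)) - log (cosh (q * z))) / (p - q)

theorem logGiniSymm_zero (p q : ℝ) : logGiniSymm p q 0 = 0 := by simp [logGiniSymm]

theorem hasDerivAt_logGiniSymm_zero (p q : ℝ) : HasDerivAt (logGiniSymm p q) 0 0 := by
  have hlc (r : ℝ) : HasDerivAt (fun z => log (cosh (r * z))) 0 0 := by
    simpa using (((hasDerivAt_id (0 : ℝ)).const_mul r).cosh).log (cosh_pos _).ne'
  have h := ((hlc p).sub (hlc q)).div_const (p - q)
  rwa [sub_self, zero_div] at h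

theorem tendsto_logGiniSymm_div_sq {p q : ℝ} (hpq : p ≠ q) :
    Tendsto (fun z => logGiniSymm p q z / z ^ 2) (𝓝[≠] 0) (𝓝 ((p + q) / 2)) := by
  convert ((tendsto_log_cosh_mul_div_sq p).sub (tendsto_log_cosh_mul_div_sq q)).div_const (p - q)
    using 2 with z
  · simp only [logGiniSymm]; ring
  · field_simp [sub_ne_zero.2 hpq]; ring

theorem exp_add_rpow_add_exp_sub_rpow (m δ r : ℝ) :
    exp (m + δ) ^ r + exp (m - δ) ^ r = 2 * exp (r * m + log (cosh (r * δ))) := by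
  rw [← exp_mul, ← exp_mul, exp_add, exp_log (cosh_pos _), cosh_eq, mul_div_assoc', mul_add,
    ← exp_add, ← exp_add]
  ring_nf

theorem gini_exp_exp {p q : ℝ} (hpq : p ≠ q) (u v : ℝ) :
    gini p q (exp u) (exp v) = exp ((u + v) / 2 + logGiniSymm p q ((u - v) / 2)) := by
  obtain ⟨m, δ, rfl, rfl⟩ : ∃ m δ, u = m + δ ∧ v = m - δ :=
    ⟨(u + v) / 2, (u - v) / 2, by ring, by ring⟩
  rw [show (m + δ + (m - δ)) / 2 = m by ring, show (m + δ - (m - δ)) / 2 = δ by ring, gini,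
    exp_add_rpow_add_exp_sub_rpow, exp_add_rpow_add_exp_sub_rpow,
    mul_div_mul_left _ _ two_ne_zero, ← exp_sub, ← exp_mul, logGiniSymm]
  congr 1
  field_simp [sub_ne_zero.2 hpq]
  ring

theorem gini_exp_exp_neg {p q : ℝ} (hpq : p ≠ q) (t : ℝ) :
    gini p q (exp t) (exp (-t)) = exp (logGiniSymm p q t) := by
  rw [gini_exp_exp hpq]
  ring_nf

theorem second_taylor_coefficient (a b c d p q : ℝ) (hab : a ≠ b) (hcd : c ≠ d) (hpq : p ≠ q)
    (h : ∀ x y : ℝ, 0 < x → 0 < y →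
      gini p q (gini a b x y) (gini c d x y) = gini p q x y) :
    a + b + c + d = 2 * (p + q) := by
  set u := logGiniSymm a b
  set v := logGiniSymm c d
  have hinv (t : ℝ) :
      logGiniSymm p q t = (u t + v t) / 2 + logGiniSymm p q ((u t - v t) / 2) := by
    have ht := h (exp t) (exp (-t)) (exp_pos t) (exp_pos (-t))
    rwa [gini_exp_exp_neg hab, gini_exp_exp_neg hcd, gini_exp_exp_neg hpq, gini_exp_exp hpq,
      exp_eq_exp, eq_comm] at ht
  have hu : Tendsto (fun t => u t / t ^ 2) (𝓝[≠] 0) (𝓝 ((a + b) / 2)) :=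
    tendsto_logGiniSymm_div_sq hab
  have hv : Tendsto (fun t => v t / t ^ 2) (𝓝[≠] 0) (𝓝 ((c + d) / 2)) :=
    tendsto_logGiniSymm_div_sq hcd
  have hmean : Tendsto (fun t => (u t + v t) / 2 / t ^ 2) (𝓝[≠] 0)
      (𝓝 (((a + b) / 2 + (c + d) / 2) / 2)) :=
    ((hu.add hv).div_const 2).congr fun t => by ring
  have hrem := (hasDerivAt_logGiniSymm_zero p q).tendsto_comp_div_sq (logGiniSymm_zero p q)
    (w := fun t => (u t - v t) / 2) (((hu.sub hv).div_const 2).congr fun t => by ring)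
  have hlim := (hmean.add hrem).congr fun t => by rw [← add_div, ← hinv]
  have := tendsto_nhds_unique hlim (tendsto_logGiniSymm_div_sq hpq)
  linarith
end
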